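/- arXiv:1904.05295 — 2 statements merged into one kernel-verified Lean document; each statement's English description precedes it below -/
import Mathlib

section
/- Let Γ be a group (under composition) of orientation-preserving homeomorphisms of ℝ, i.e. of strictly increasing continuous bijections of ℝ, acting freely on ℝ (every non-identity element has no fixed point) and transitively on ℝ (for all x, y ∈ ℝ there exists g ∈ Γ with g(x) = y). Then Γ is topologically conjugate to the full group of translations of ℝ: there exists a homeomorphism ψ : ℝ → ℝ such that Γ = { ψ⁻¹ ∘ T_t ∘ ψ : t ∈ ℝ }, where T_t : ℝ → ℝ is the translation T_t(s) = s + t. -/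
/-!
Freeness and transitivity make `g ↦ g 0` a bijection `Γ → ℝ`. Order `Γ` through it: by the
intermediate value theorem a fixed-point-free `g` moves every point in the same direction, so
`g 0 < h 0` forces `g < h` pointwise and the order is invariant under multiplication on both
sides. Being order-isomorphic to `ℝ`, this bi-ordered group is Archimedean by completeness, hence
abelian (Hölder's argument), hence embeds in `(ℝ, +)`; the image is a dense subgroup and so all of
`ℝ`. Transporting this isomorphism along the orbit map conjugates every `g` to a translation.
-/

open Filter Function Set

section BiOrderedGroup

variable {G : Type*} [Group G] [LinearOrder G] [MulLeftMono G] [MulRightMono G]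

theorem exists_zpow_le_and_lt_zpow_add_one
    (harch : ∀ (a : G) {b : G}, 1 < b → ∃ n : ℕ, a ≤ b ^ n) {c : G} (hc : 1 < c) (a : G) :
    ∃ m : ℤ, c ^ m ≤ a ∧ a < c ^ (m + 1) := by
  have hmono : StrictMono fun m : ℤ => c ^ m :=
    strictMono_int_of_lt_succ fun m => by rw [zpow_add_one]; exact lt_mul_of_one_lt_right' _ hc
  obtain ⟨n, hn⟩ := harch a hc
  obtain ⟨k, hk⟩ := harch a⁻¹ hc
  obtain ⟨m, hm, hmax⟩ := Int.exists_greatest_of_bdd (P := fun m : ℤ => c ^ m ≤ a)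
    ⟨n, fun m hm => hmono.le_iff_le.1 (hm.trans (by simpa using hn))⟩
    ⟨-k, by simpa [zpow_neg] using inv_le_of_inv_le' (by simpa using hk)⟩
  exact ⟨m, hm, lt_of_not_ge fun h => (lt_add_one m).not_ge (hmax _ h)⟩

theorem exists_one_lt_mul_self_le [DenselyOrdered G] {g : G} (hg : 1 < g) :
    ∃ h : G, 1 < h ∧ h * h ≤ g := by
  obtain ⟨f, hf1, hfg⟩ := exists_between hg
  by_cases hff : f * f ≤ g
  · exact ⟨f, hf1, hff⟩
  -- If `f` is too large, its complement `f⁻¹ * g` is small enough.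
  refine ⟨f⁻¹ * g, lt_inv_mul_iff_lt.2 hfg, ?_⟩
  calc f⁻¹ * g * (f⁻¹ * g) = f⁻¹ * (g * f⁻¹) * g := by group
    _ ≤ f⁻¹ * f * g := by gcongr; exact (mul_inv_lt_iff_lt_mul.2 (not_le.1 hff)).le
    _ = g := by group

theorem mul_comm_of_archimedean [DenselyOrdered G]
    (harch : ∀ (a : G) {b : G}, 1 < b → ∃ n : ℕ, a ≤ b ^ n) (a b : G) : a * b = b * a := by
  wlog hlt : b * a < a * b generalizing a b
  · rcases (not_lt.1 hlt).lt_or_eq with h | h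
    · exact (this b a h).symm
    · exact h
  -- Measure `a` and `b` in units of `c`, where `c ^ 2` is at most the commutator `ε`.
  set ε := (b * a)⁻¹ * (a * b)
  obtain ⟨c, hc, hcε⟩ := exists_one_lt_mul_self_le (lt_inv_mul_iff_lt.2 hlt)
  obtain ⟨m, ham, ham'⟩ := exists_zpow_le_and_lt_zpow_add_one harch hc a
  obtain ⟨n, hbn, hbn'⟩ := exists_zpow_le_and_lt_zpow_add_one harch hc b
  have hε : ε < c * c := calc
    ε < (c ^ n * c ^ m)⁻¹ * (c ^ (m + 1) * c ^ (n + 1)) :=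
      mul_lt_mul_of_le_of_lt (inv_le_inv_iff.2 (mul_le_mul' hbn ham))
        (mul_lt_mul_of_lt_of_lt ham' hbn')
    _ = c * c := by rw [← zpow_add, ← zpow_add, ← zpow_neg, ← zpow_add, ← zpow_two]; ring_nf
  exact (hε.trans_le hcε).false.elim

theorem exists_le_pow_of_orderIso_real (e : G ≃o ℝ) (a : G) {b : G} (hb : 1 < b) :
    ∃ n : ℕ, a ≤ b ^ n := by
  by_contra! h
  have hbdd : BddAbove (range fun n : ℕ => e (b ^ n)) :=
    ⟨e a, forall_mem_range.2 fun n => e.monotone (h n).le⟩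
  set σ := e.symm (sSup (range fun n : ℕ => e (b ^ n)))
  have hσ (n : ℕ) : b ^ n ≤ σ := e.le_symm_apply.2 (le_csSup hbdd ⟨n, rfl⟩)
  -- `σ * b⁻¹` is a smaller upper bound of the powers of `b`.
  have hσb : σ ≤ σ * b⁻¹ := e.symm_apply_le.2 <| csSup_le (range_nonempty _) <|
    forall_mem_range.2 fun n => e.monotone <| by
      simpa [pow_succ] using (mul_le_mul_iff_right b⁻¹).2 (hσ (n + 1))
  exact hσb.not_gt (mul_lt_of_lt_one_right' σ (inv_lt_one'.2 hb))

end BiOrderedGroup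

theorem Monotone.surjective_of_denseRange {f : ℝ → ℝ} (hf : Monotone f) (hd : DenseRange f) :
    Surjective f := by
  have hgt (b : ℝ) : ∃ a, b < f a := hd.exists_mem_open isOpen_Ioi nonempty_Ioi
  have hlt (b : ℝ) : ∃ a, f a < b := hd.exists_mem_open isOpen_Iio nonempty_Iio
  exact (hf.continuous_of_denseRange hd).surjective
    (tendsto_atTop_atTop_of_monotone hf fun b => (hgt b).imp fun _ => le_of_lt)
    (tendsto_atBot_atBot_of_monotone hf fun b => (hlt b).imp fun _ => le_of_lt)

theorem OrderAddMonoidHom.surjective_of_orderIso_real {M : Type*} [AddCommGroup M] [LinearOrder M]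
    [IsOrderedAddMonoid M] (f : M →+o ℝ) (hf : Injective f) (e : M ≃o ℝ) : Surjective f := by
  have : DenselyOrdered M := (denselyOrdered_iff_of_orderIsoClass e).2 inferInstance
  have : Nontrivial M := e.symm.injective.nontrivial
  have hstrict : StrictMono f := (OrderHomClass.mono f).strictMono_of_injective hf
  have hdense : Dense (f.toAddMonoidHom.range : Set ℝ) := by
    refine AddSubgroup.dense_of_no_min _ ?_ ?_
    · obtain ⟨x, hx⟩ := exists_ne (0 : M)
      exact fun hbot => (map_ne_zero_iff f hf).2 hx <|
        AddSubgroup.mem_bot.1 (hbot ▸ AddMonoidHom.mem_range.2 ⟨x, rfl⟩)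
    · rintro ⟨_, ⟨⟨x, rfl⟩, hx⟩, hleast⟩
      have hx0 : 0 < x := hstrict.lt_iff_lt.1 (by simpa using hx)
      obtain ⟨y, hy0, hyx⟩ := exists_between hx0
      exact (hstrict hyx).not_ge (hleast ⟨⟨y, rfl⟩, by simpa using hstrict hy0⟩)
  have hcomp : Surjective (f ∘ e.symm) := (hstrict.monotone.comp e.symm.monotone)
    |>.surjective_of_denseRange (by rwa [DenseRange, e.symm.surjective.range_comp])
  exact hcomp.of_comp

theorem exists_orderIso_real_map_mul {G : Type*} [Group G] [LinearOrder G] [MulLeftMono G]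
    [MulRightMono G] (e : G ≃o ℝ) : ∃ φ : G ≃o ℝ, ∀ a b, φ (a * b) = φ a + φ b := by
  have : DenselyOrdered G := (denselyOrdered_iff_of_orderIsoClass e).2 inferInstance
  let : CommGroup G :=
    { ‹Group G› with mul_comm := mul_comm_of_archimedean (exists_le_pow_of_orderIso_real e) }
  have : IsOrderedMonoid G :=
    ⟨fun _ _ h c => mul_le_mul_left h c, fun _ _ h c => mul_le_mul_right h c⟩
  have : MulArchimedean G := ⟨exists_le_pow_of_orderIso_real e⟩
  obtain ⟨f, hf⟩ := Archimedean.exists_orderAddMonoidHom_real_injective (Additive G)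
  exact ⟨StrictMono.orderIsoOfSurjective (f ∘ Additive.ofMul)
    ((OrderHomClass.mono f).strictMono_of_injective hf) (f.surjective_of_orderIso_real hf e),
    fun a b => map_add f (Additive.ofMul a) (Additive.ofMul b)⟩

theorem Continuous.lt_apply_of_lt_apply {α : Type*} [LinearOrder α] [TopologicalSpace α]
    [OrderClosedTopology α] [PreconnectedSpace α] {f : α → α} (hf : Continuous f)
    (hfix : ∀ z, f z ≠ z) {x : α} (hx : x < f x) (y : α) : y < f y := by
  by_contra! hy
  obtain ⟨z, hz⟩ := intermediate_value_univ₂ continuous_id hf hx.le hy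
  exact hfix z hz.symm

namespace Equiv.Perm

variable {Γ : Subgroup (Perm ℝ)}

theorem apply_zero_injective_of_free (hfree : ∀ g ∈ Γ, g ≠ 1 → ∀ x : ℝ, g x ≠ x) :
    Injective fun g : Γ => (g : Perm ℝ) 0 := by
  intro g h hgh
  by_contra hne
  refine hfree _ (Γ.mul_mem (Γ.inv_mem g.2) h.2) (fun h1 => hne ?_) 0 ?_
  · exact Subtype.ext (inv_mul_eq_one.1 h1)
  · simp only [coe_mul, Function.comp_apply]
    exact Perm.inv_eq_iff_eq.2 hgh.symm

theorem apply_lt_apply_of_apply_lt (hcont : ∀ g ∈ Γ, Continuous (g : ℝ → ℝ))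
    (hfree : ∀ g ∈ Γ, g ≠ 1 → ∀ x : ℝ, g x ≠ x) {g h : Γ} {x : ℝ}
    (hx : (g : Perm ℝ) x < (h : Perm ℝ) x) (y : ℝ) : (g : Perm ℝ) y < (h : Perm ℝ) y := by
  set k : Perm ℝ := h * g⁻¹
  have hkΓ : k ∈ Γ := Γ.mul_mem h.2 (Γ.inv_mem g.2)
  have hk (z : ℝ) : k ((g : Perm ℝ) z) = (h : Perm ℝ) z := by simp [k]
  have hlt : (g : Perm ℝ) x < k ((g : Perm ℝ) x) := by rwa [hk]
  have hk1 : k ≠ 1 := fun h1 => hlt.ne (by rw [h1]; rfl)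
  simpa [hk] using (hcont k hkΓ).lt_apply_of_lt_apply (hfree k hkΓ hk1) hlt ((g : Perm ℝ) y)

theorem apply_le_apply_of_apply_le (hcont : ∀ g ∈ Γ, Continuous (g : ℝ → ℝ))
    (hfree : ∀ g ∈ Γ, g ≠ 1 → ∀ x : ℝ, g x ≠ x) {g h : Γ} {x : ℝ}
    (hx : (g : Perm ℝ) x ≤ (h : Perm ℝ) x) (y : ℝ) : (g : Perm ℝ) y ≤ (h : Perm ℝ) y :=
  not_lt.1 fun hy => (apply_lt_apply_of_apply_lt hcont hfree hy x).not_ge hx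

theorem exists_orderIso_semiconj_translation (hmono : ∀ g ∈ Γ, StrictMono (g : ℝ → ℝ))
    (hcont : ∀ g ∈ Γ, Continuous (g : ℝ → ℝ)) (hfree : ∀ g ∈ Γ, g ≠ 1 → ∀ x : ℝ, g x ≠ x)
    (htrans : ∀ x y : ℝ, ∃ g ∈ Γ, g x = y) :
    ∃ (τ : Γ → ℝ) (ψ : ℝ ≃o ℝ), Surjective τ ∧
      ∀ (g : Γ) (x : ℝ), ψ ((g : Perm ℝ) x) = ψ x + τ g := by
  let : LinearOrder Γ := LinearOrder.lift' _ (apply_zero_injective_of_free hfree)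
  have : MulLeftMono Γ := ⟨fun k _ _ hgh => (hmono k k.2).monotone hgh⟩
  have : MulRightMono Γ :=
    ⟨fun k _ _ hgh => apply_le_apply_of_apply_le hcont hfree hgh ((k : Perm ℝ) 0)⟩
  let e : Γ ≃o ℝ :=
    { Equiv.ofBijective _ ⟨apply_zero_injective_of_free hfree, fun y =>
        let ⟨g, hg, hgy⟩ := htrans 0 y; ⟨⟨g, hg⟩, hgy⟩⟩ with map_rel_iff' := Iff.rfl }
  obtain ⟨φ, hφ⟩ := exists_orderIso_real_map_mul e
  refine ⟨φ, e.symm.trans φ, φ.surjective, fun g x => ?_⟩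
  have he : e.symm ((g : Perm ℝ) x) = g * e.symm x :=
    e.symm_apply_eq.2 (congrArg (g : Perm ℝ) (e.apply_symm_apply x)).symm
  simp [he, hφ, add_comm]

end Equiv.Perm

/-- A group of orientation-preserving homeomorphisms of `ℝ` acting freely and
transitively on `ℝ` is topologically conjugate, by a single homeomorphism
`ψ : ℝ → ℝ`, to the full group of translations of `ℝ`. -/
theorem free_transitive_line_action_conjugate_to_translations
    (Γ : Subgroup (Equiv.Perm ℝ))
    (hmono : ∀ g ∈ Γ, StrictMono (g : ℝ → ℝ))
    (hcont : ∀ g ∈ Γ, Continuous (g : ℝ → ℝ))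
    (hfree : ∀ g ∈ Γ, g ≠ 1 → ∀ x : ℝ, g x ≠ x)
    (htrans : ∀ x y : ℝ, ∃ g ∈ Γ, g x = y) :
    ∃ ψ : Homeomorph ℝ ℝ, ∀ g : Equiv.Perm ℝ,
      g ∈ Γ ↔ ∃ t : ℝ, (g : ℝ → ℝ) = ψ.symm ∘ (fun s : ℝ => s + t) ∘ ψ := by
  obtain ⟨τ, ψ, hτ, hψ⟩ :=
    Equiv.Perm.exists_orderIso_semiconj_translation hmono hcont hfree htrans
  have hconj (g : Γ) : ((g : Equiv.Perm ℝ) : ℝ → ℝ) = ψ.symm ∘ (fun s => s + τ g) ∘ ψ := by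
    funext x
    simp [← hψ]
  refine ⟨ψ.toHomeomorph, fun g => ⟨fun hg => ⟨τ ⟨g, hg⟩, hconj ⟨g, hg⟩⟩, ?_⟩⟩
  rintro ⟨t, ht⟩
  obtain ⟨h, rfl⟩ := hτ t
  have : g = h := Equiv.coe_fn_injective (ht.trans (hconj h).symm)
  exact this ▸ h.2
end

section
/- Let Γ be a group (under composition) of orientation-preserving homeomorphisms of the circle ℝ/ℤ (each admitting a strictly increasing continuous lift G : ℝ → ℝ with G(x+1) = G(x)+1 projecting to it), acting freely on ℝ/ℤ (every non-identity element has no fixed point) and transitively on ℝ/ℤ (for all x, y ∈ ℝ/ℤ there exists g ∈ Γ with g(x) = y). Then Γ is topologically conjugate to the full rotation group of the circle: there exists a homeomorphism ψ : ℝ/ℤ → ℝ/ℤ such that Γ = { ψ⁻¹ ∘ R_t ∘ ψ : t ∈ ℝ/ℤ }, where R_t : ℝ/ℤ → ℝ/ℤ is the rotation R_t(s) = s + t. -/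
/-!
The lifts to `ℝ` of the elements of `Γ` form a group `L` containing the integer translations and
acting freely and transitively on `ℝ`. Freeness and the intermediate value theorem make `L`
totally ordered pointwise; this order lets one reorder the factors of `(F * G) ^ n` at bounded
cost, so the translation number `τ` is an injective homomorphism on `L`. Hence
`ψ x := τ (the element of L sending 0 to x)` is strictly increasing, commutes with `x ↦ x + 1` and
satisfies `ψ ∘ F = (τ F + ·) ∘ ψ`. Its range is an uncountable, hence dense, subgroup of `ℝ`, so `ψ`
is continuous and bijective, and it descends to the conjugating homeomorphism of the circle.
-/

open Function Set

section OrderedMonoid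

variable {M : Type*} [Monoid M] [Preorder M] [MulLeftMono M] [MulRightMono M] {a b : M}

theorem pow_mul_le_mul_pow_of_mul_le (h : b * a ≤ a * b) (n : ℕ) : b ^ n * a ≤ a * b ^ n := by
  induction n with
  | zero => simp
  | succ n ih =>
    calc b ^ (n + 1) * a = b ^ n * (b * a) := by rw [pow_succ, mul_assoc]
      _ ≤ b ^ n * (a * b) := mul_le_mul_right h _
      _ = b ^ n * a * b := (mul_assoc _ _ _).symm
      _ ≤ a * b ^ n * b := mul_le_mul_left ih _
      _ = a * b ^ (n + 1) := by rw [pow_succ, mul_assoc]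

theorem mul_pow_le_pow_mul_pow_of_mul_le (h : b * a ≤ a * b) (n : ℕ) :
    (a * b) ^ n ≤ a ^ n * b ^ n := by
  induction n with
  | zero => simp
  | succ n ih =>
    calc (a * b) ^ (n + 1) = (a * b) ^ n * (a * b) := pow_succ _ _
      _ ≤ a ^ n * b ^ n * (a * b) := mul_le_mul_left ih _
      _ = a ^ n * (b ^ n * a) * b := by simp only [mul_assoc]
      _ ≤ a ^ n * (a * b ^ n) * b :=
        mul_le_mul_left (mul_le_mul_right (pow_mul_le_mul_pow_of_mul_le h n) _) _
      _ = a ^ (n + 1) * b ^ (n + 1) := by simp only [pow_succ, mul_assoc]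

theorem pow_mul_pow_le_mul_pow_of_mul_le (h : b * a ≤ a * b) (n : ℕ) :
    b ^ n * a ^ n ≤ (b * a) ^ n :=
  mul_pow_le_pow_mul_pow_of_mul_le (M := Mᵒᵈ) (a := OrderDual.toDual b)
    (b := OrderDual.toDual a) h n

end OrderedMonoid

theorem UnitAddCircle.exists_eq_add_intCast_of_coe_eq {a b : ℝ}
    (h : (a : UnitAddCircle) = b) : ∃ n : ℤ, a = b + n := by
  rw [← sub_eq_zero, ← AddCircle.coe_sub, AddCircle.coe_eq_zero_iff] at h
  obtain ⟨n, hn⟩ := h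
  exact ⟨n, by rw [zsmul_one] at hn; linarith⟩

namespace CircleDeg1Lift

local notation "τ" => translationNumber

instance : MulLeftMono CircleDeg1Lift := ⟨fun f _ _ h x => f.mono (h x)⟩

instance : MulRightMono CircleDeg1Lift := ⟨fun f _ _ h x => h (f x)⟩

theorem translationNumber_mul_of_le {f g : CircleDeg1Lift} (h : g * f ≤ f * g) :
    τ (f * g) = τ f + τ g := by
  refine tendsto_nhds_unique ?_
    (f.tendsto_translationNumber_aux.add g.tendsto_translationNumber_aux)
  simp only [transnumAuxSeq, ← add_div]
  refine (f * g).tendsto_translationNumber_of_dist_bounded_aux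
    (fun n ↦ (f ^ n) 0 + (g ^ n) 0) 1 fun n ↦ ?_
  have hup : ((f * g) ^ n) 0 < (f ^ n) 0 + (g ^ n) 0 + 1 :=
    (mul_pow_le_pow_mul_pow_of_mul_le h n 0).trans_lt ((f ^ n).map_map_zero_lt (g ^ n))
  have hlow : (g ^ n) 0 + (f ^ n) 0 - 1 < ((f * g) ^ n) 0 :=
    ((g ^ n).lt_map_map_zero (f ^ n)).trans_le
      ((pow_mul_pow_le_mul_pow_of_mul_le h n).trans (pow_mono h n) 0)
  rw [Real.dist_eq, abs_sub_le_iff]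
  constructor <;> linarith

theorem translationNumber_mul_comm (f g : CircleDeg1Lift) : τ (f * g) = τ (g * f) :=
  (translationNumber_eq_of_semiconjBy (mul_assoc f g f).symm).symm

theorem bijective_of_injective_of_range_eq_addSubgroup {f : CircleDeg1Lift} (hf : Injective f)
    {S : AddSubgroup ℝ} (hS : range f = S) : Bijective f := by
  have hdense : Dense (S : Set ℝ) := by
    refine S.dense_or_cyclic.resolve_right ?_
    rintro ⟨a, rfl⟩
    have hcount : (range f).Countable := hS ▸ (countable_range fun n : ℤ => n • a).mono
      fun _ hx => AddSubgroup.mem_closure_singleton.mp hx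
    exact Cardinal.not_countable_real (by simpa using hcount.preimage hf)
  refine ⟨hf, f.continuous_iff_surjective.1 (f.monotone.continuous_of_denseRange ?_)⟩
  rwa [DenseRange, hS]

theorem continuous_units (F : CircleDeg1Liftˣ) : Continuous F := (toOrderIso F).continuous

section Circle

def circleMap (f : CircleDeg1Lift) : UnitAddCircle → UnitAddCircle :=
  Quotient.map' f fun x y hxy => by
    rw [QuotientAddGroup.leftRel_apply, AddSubgroup.mem_zmultiples_iff] at hxy ⊢
    obtain ⟨n, hn⟩ := hxy
    rw [zsmul_one, eq_neg_add_iff_add_eq] at hn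
    subst hn
    exact ⟨n, by simp⟩

@[simp]
theorem circleMap_coe (f : CircleDeg1Lift) (x : ℝ) : f.circleMap x = (f x : UnitAddCircle) :=
  rfl

theorem continuous_circleMap {f : CircleDeg1Lift} (hf : Continuous f) : Continuous f.circleMap :=
  hf.quotient_map' _

def circlePerm : CircleDeg1Liftˣ →* Equiv.Perm UnitAddCircle where
  toFun F :=
    { toFun := circleMap F
      invFun := circleMap ↑F⁻¹
      left_inv := fun s => by
        induction s using QuotientAddGroup.induction_on
        simp
      right_inv := fun s => by
        induction s using QuotientAddGroup.induction_on
        simp }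
  map_one' := by ext s; induction s using QuotientAddGroup.induction_on; simp
  map_mul' F G := by ext s; induction s using QuotientAddGroup.induction_on; simp

@[simp]
theorem circlePerm_apply_coe (F : CircleDeg1Liftˣ) (x : ℝ) :
    circlePerm F x = (F x : UnitAddCircle) :=
  rfl

theorem circlePerm_translate (t : ℝ) :
    circlePerm (translate (Multiplicative.ofAdd t)) = Equiv.addLeft (t : UnitAddCircle) := by
  ext s
  induction s using QuotientAddGroup.induction_on
  simp

theorem circlePerm_translate_intCast (n : ℤ) :
    circlePerm (translate (Multiplicative.ofAdd (n : ℝ))) = 1 := by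
  ext s
  simp [circlePerm_translate]

theorem exists_circlePerm_eq {g : Equiv.Perm UnitAddCircle} {G : ℝ → ℝ} (hmono : StrictMono G)
    (hcont : Continuous G) (hper : ∀ x, G (x + 1) = G x + 1)
    (hG : ∀ x : ℝ, (G x : UnitAddCircle) = g x) : ∃ F : CircleDeg1Liftˣ, circlePerm F = g := by
  let f : CircleDeg1Lift := ⟨⟨G, hmono.monotone⟩, hper⟩
  obtain ⟨F, hF⟩ := isUnit_iff_bijective.2
    (⟨hmono.injective, f.continuous_iff_surjective.1 hcont⟩ : Bijective f)
  refine ⟨F, Equiv.ext fun s => ?_⟩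
  induction s using QuotientAddGroup.induction_on
  simp [hF, f, hG]

theorem eq_one_of_circlePerm_eq_one {F : CircleDeg1Liftˣ} (h : circlePerm F = 1) {x : ℝ}
    (hx : F x = x) : F = 1 := by
  have hτ : τ F = 0 := by
    simpa using translationNumber_of_eq_add_int _ (m := 0) (by simpa using hx)
  ext y
  obtain ⟨m, hm⟩ := UnitAddCircle.exists_eq_add_intCast_of_coe_eq
    (by simpa using congrArg (· (y : UnitAddCircle)) h)
  have hm0 : (m : ℝ) = 0 := (translationNumber_of_eq_add_int _ hm).symm.trans hτ
  simp [hm, hm0]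

def circleHomeomorph (F : CircleDeg1Liftˣ) : UnitAddCircle ≃ₜ UnitAddCircle where
  toEquiv := circlePerm F
  continuous_toFun := continuous_circleMap (continuous_units F)
  continuous_invFun := continuous_circleMap (continuous_units F⁻¹)

@[simp]
theorem coe_circleHomeomorph (F : CircleDeg1Liftˣ) : ⇑(circleHomeomorph F) = circlePerm F :=
  rfl

@[simp]
theorem coe_circleHomeomorph_symm (F : CircleDeg1Liftˣ) :
    ⇑(circleHomeomorph F).symm = circlePerm F⁻¹ :=
  rfl

theorem coe_circlePerm_conj_translate (Ψ : CircleDeg1Liftˣ) (t : ℝ) :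
    ⇑(circlePerm (Ψ⁻¹ * translate (Multiplicative.ofAdd t) * Ψ)) =
      (circleHomeomorph Ψ).symm ∘ (· + (t : UnitAddCircle)) ∘ circleHomeomorph Ψ := by
  ext s
  simp [circlePerm_translate, add_comm]

end Circle

section FreeAction

variable {L : Subgroup CircleDeg1Liftˣ} {F G : CircleDeg1Liftˣ}

theorem le_of_apply_zero_le (hfree : ∀ F ∈ L, ∀ x, F x = x → F = 1) (hF : F ∈ L) (hG : G ∈ L)
    (h : F 0 ≤ G 0) : (F : CircleDeg1Lift) ≤ G := by
  intro x
  by_contra! hx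
  obtain ⟨y, hy⟩ : ∃ y, (G⁻¹ * F) y = id y :=
    intermediate_value_univ₂ (continuous_units _) continuous_id
      (by simpa using mono (↑G⁻¹) h) (by simpa using mono (↑G⁻¹) hx.le)
  obtain rfl := inv_mul_eq_one.mp (hfree _ (mul_mem (inv_mem hG) hF) y hy)
  exact lt_irrefl _ hx

theorem eq_of_apply_zero_eq (hfree : ∀ F ∈ L, ∀ x, F x = x → F = 1) (hF : F ∈ L) (hG : G ∈ L)
    (h : F 0 = G 0) : F = G :=
  Units.ext <| le_antisymm (le_of_apply_zero_le hfree hF hG h.le)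
    (le_of_apply_zero_le hfree hG hF h.ge)

theorem translationNumber_mul_of_mem (hfree : ∀ F ∈ L, ∀ x, F x = x → F = 1) (hF : F ∈ L)
    (hG : G ∈ L) : τ ↑(F * G) = τ F + τ G := by
  rw [Units.val_mul]
  rcases le_total ((G * F : CircleDeg1Liftˣ) 0) ((F * G : CircleDeg1Liftˣ) 0) with h | h
  · exact translationNumber_mul_of_le
      (le_of_apply_zero_le hfree (mul_mem hG hF) (mul_mem hF hG) h)
  · rw [translationNumber_mul_comm, add_comm]
    exact translationNumber_mul_of_le
      (le_of_apply_zero_le hfree (mul_mem hF hG) (mul_mem hG hF) h)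

theorem eq_of_translationNumber_eq (hfree : ∀ F ∈ L, ∀ x, F x = x → F = 1) (hF : F ∈ L)
    (hG : G ∈ L) (h : τ F = τ G) : F = G := by
  obtain ⟨x, hx⟩ := exists_eq_add_translationNumber _ (continuous_units (G⁻¹ * F))
  have hτ : τ ↑(G⁻¹ * F) = 0 := by
    rw [translationNumber_mul_of_mem hfree (inv_mem hG) hF, translationNumber_units_inv, h,
      neg_add_cancel]
  rw [hτ, add_zero] at hx
  exact (inv_mul_eq_one.mp (hfree _ (mul_mem (inv_mem hG) hF) x hx)).symm

def translationNumberAddSubgroup (hfree : ∀ F ∈ L, ∀ x, F x = x → F = 1) : AddSubgroup ℝ where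
  carrier := {t | ∃ F ∈ L, τ F = t}
  add_mem' := by
    rintro _ _ ⟨F, hF, rfl⟩ ⟨G, hG, rfl⟩
    exact ⟨F * G, mul_mem hF hG, translationNumber_mul_of_mem hfree hF hG⟩
  zero_mem' := ⟨1, one_mem L, translationNumber_one⟩
  neg_mem' := by
    rintro _ ⟨F, hF, rfl⟩
    exact ⟨F⁻¹, inv_mem hF, translationNumber_units_inv F⟩

theorem exists_injective_range_eq_translationNumberAddSubgroup
    (hfree : ∀ F ∈ L, ∀ x, F x = x → F = 1) (htrans : ∀ x, ∃ F ∈ L, F 0 = x)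
    (hT : translate (Multiplicative.ofAdd 1) ∈ L) :
    ∃ ψ : CircleDeg1Lift, Injective ψ ∧ range ψ = translationNumberAddSubgroup hfree ∧
      ∀ F ∈ L, ∀ x, ψ (F x) = τ F + ψ x := by
  choose G hGL hG0 using htrans
  have hG_apply : ∀ F ∈ L, ∀ x, G (F x) = F * G x := fun F hF x =>
    eq_of_apply_zero_eq hfree (hGL _) (mul_mem hF (hGL x)) (by simp [hG0])
  have hmono : Monotone fun x => τ (G x) := fun x y hxy =>
    translationNumber_mono (le_of_apply_zero_le hfree (hGL x) (hGL y) (by simpa [hG0]))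
  obtain ⟨ψ, hψ⟩ : ∃ ψ : CircleDeg1Lift, ∀ x, ψ x = τ (G x) := ⟨⟨⟨fun x => τ (G x), hmono⟩,
    fun x => by
      have hx := hG_apply _ hT x
      rw [translate_apply, add_comm] at hx
      change τ (G (x + 1)) = τ (G x) + 1
      rw [hx, translationNumber_mul_of_mem hfree hT (hGL x), translationNumber_translate,
        add_comm]⟩, fun _ => rfl⟩
  refine ⟨ψ, fun x y hxy => ?_, Set.ext fun t => ⟨?_, ?_⟩, fun F hF x => ?_⟩
  · rw [hψ, hψ] at hxy
    simpa [hG0] using congrArg (· 0) (eq_of_translationNumber_eq hfree (hGL x) (hGL y) hxy)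
  · rintro ⟨x, rfl⟩
    exact ⟨G x, hGL x, (hψ x).symm⟩
  · rintro ⟨F, hF, rfl⟩
    exact ⟨F 0, by rw [hψ, eq_of_apply_zero_eq hfree (hGL _) hF (hG0 _)]⟩
  · rw [hψ, hψ, hG_apply F hF x, translationNumber_mul_of_mem hfree hF (hGL x)]

theorem exists_conj_translate_eq_iff_mem
    (hfree : ∀ F ∈ L, ∀ x, F x = x → F = 1) (htrans : ∀ x, ∃ F ∈ L, F 0 = x)
    (hT : translate (Multiplicative.ofAdd 1) ∈ L) :
    ∃ Ψ : CircleDeg1Liftˣ,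
      ∀ F, F ∈ L ↔ ∃ t : ℝ, Ψ⁻¹ * translate (Multiplicative.ofAdd t) * Ψ = F := by
  obtain ⟨ψ, hinj, hrange, hequiv⟩ :=
    exists_injective_range_eq_translationNumberAddSubgroup hfree htrans hT
  have hbij := bijective_of_injective_of_range_eq_addSubgroup hinj hrange
  obtain ⟨Ψ, rfl⟩ := isUnit_iff_bijective.2 hbij
  have hconj : ∀ F ∈ L, Ψ⁻¹ * translate (Multiplicative.ofAdd (τ F)) * Ψ = F := fun F hF => by
    rw [mul_assoc, inv_mul_eq_iff_eq_mul]
    ext x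
    simp [hequiv F hF x]
  refine ⟨Ψ, fun F => ⟨fun hF => ⟨_, hconj F hF⟩, ?_⟩⟩
  rintro ⟨t, rfl⟩
  obtain ⟨G, hG, rfl⟩ : t ∈ (translationNumberAddSubgroup hfree : Set ℝ) :=
    hrange ▸ hbij.2 t
  rwa [hconj G hG]

end FreeAction

end CircleDeg1Lift

open CircleDeg1Lift

/-- A group of orientation-preserving homeomorphisms of the circle `ℝ/ℤ`
acting freely and transitively on the circle is topologically conjugate, by a
single homeomorphism `ψ` of the circle, to the full rotation group. -/
theorem free_transitive_circle_action_conjugate_to_rotations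
    (Γ : Subgroup (Equiv.Perm (AddCircle (1 : ℝ))))
    (hlift : ∀ g ∈ Γ, ∃ G : ℝ → ℝ, StrictMono G ∧ Continuous G ∧
      (∀ x : ℝ, G (x + 1) = G x + 1) ∧
      (∀ x : ℝ, ((G x : ℝ) : AddCircle (1 : ℝ)) = g ((x : ℝ) : AddCircle (1 : ℝ))))
    (hfree : ∀ g ∈ Γ, g ≠ 1 → ∀ x : AddCircle (1 : ℝ), g x ≠ x)
    (htrans : ∀ x y : AddCircle (1 : ℝ), ∃ g ∈ Γ, g x = y) :
    ∃ ψ : Homeomorph (AddCircle (1 : ℝ)) (AddCircle (1 : ℝ)),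
      ∀ g : Equiv.Perm (AddCircle (1 : ℝ)),
        g ∈ Γ ↔ ∃ t : AddCircle (1 : ℝ),
          (g : AddCircle (1 : ℝ) → AddCircle (1 : ℝ)) =
            ψ.symm ∘ (fun s : AddCircle (1 : ℝ) => s + t) ∘ ψ := by
  set L := Γ.comap circlePerm
  have hliftL : ∀ g ∈ Γ, ∃ F ∈ L, circlePerm F = g := fun g hg => by
    obtain ⟨G, hmono, hcont, hper, hG⟩ := hlift g hg
    obtain ⟨F, rfl⟩ := exists_circlePerm_eq hmono hcont hper hG
    exact ⟨F, hg, rfl⟩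
  have hfreeL : ∀ F ∈ L, ∀ x, F x = x → F = 1 := fun F hF x hx =>
    eq_one_of_circlePerm_eq_one (not_not.1 fun h => hfree _ hF h x (by simp [hx])) hx
  have hT : ∀ n : ℤ, translate (Multiplicative.ofAdd (n : ℝ)) ∈ L := fun n => by
    simp [L, circlePerm_translate_intCast]
  have htransL : ∀ x : ℝ, ∃ F ∈ L, F 0 = x := fun x => by
    obtain ⟨g, hg, hgx⟩ := htrans ((0 : ℝ) : UnitAddCircle) x
    obtain ⟨F, hF, rfl⟩ := hliftL g hg
    obtain ⟨n, hn⟩ := UnitAddCircle.exists_eq_add_intCast_of_coe_eq hgx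
    exact ⟨translate (Multiplicative.ofAdd ((-n : ℤ) : ℝ)) * F, mul_mem (hT _) hF, by simp [hn]⟩
  obtain ⟨Ψ, hΨ⟩ := exists_conj_translate_eq_iff_mem hfreeL htransL (by exact_mod_cast hT 1)
  refine ⟨circleHomeomorph Ψ, fun g => ⟨fun hg => ?_, fun ⟨t, ht⟩ => ?_⟩⟩
  · obtain ⟨F, hF, rfl⟩ := hliftL g hg
    obtain ⟨t, rfl⟩ := (hΨ F).1 hF
    exact ⟨t, coe_circlePerm_conj_translate Ψ t⟩
  · obtain ⟨t, rfl⟩ := QuotientAddGroup.mk_surjective t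
    have hg : circlePerm (Ψ⁻¹ * translate (Multiplicative.ofAdd t) * Ψ) = g :=
      Equiv.coe_fn_injective ((coe_circlePerm_conj_translate Ψ t).trans ht.symm)
    exact hg ▸ (hΨ _).2 ⟨t, rfl⟩
end
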